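/- arXiv:1604.06197 — 2 statements merged into one kernel-verified Lean document; each statement's English description precedes it below -/
import Mathlib

section
/- Let u₁, …, u_p be nonzero vectors in ℝ² such that ⟨u_i, u_j⟩ ≥ 0 for all i, j, the angle between u₁ and u₂ is the largest among the angles of all pairs, and (u₁, u₂) is positively oriented. Let Q ∈ SO(2) be the rotation with Q u₁ = ‖u₁‖·e₁. Then Q u_j ≥ 0 (both coordinates nonnegative) for all j ∈ {1, …, p}. -/
/-!
A rotation preserves inner products, angles and orientation, so we may assume `u₁` lies on the
positive `x`-axis. Then `⟨u₁, u_j⟩ ≥ 0` makes every first coordinate nonnegative, and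
orientation puts `u₂` in the open upper half-plane. If some `u_j` had negative second
coordinate, its angle with `u₂` would exceed that of `u₁` with `u₂`, contradicting maximality.
-/

open Matrix Real

/-- The angle between two vectors of `ℝ²`. -/
noncomputable def ang (u v : Fin 2 → ℝ) : ℝ :=
  Real.arccos ((u ⬝ᵥ v) / (Real.sqrt (u ⬝ᵥ u) * Real.sqrt (v ⬝ᵥ v)))

/-- The pair `(u, v)` is positively oriented: the determinant of the matrix
with columns `u`, `v` is positive. -/
def posOriented (u v : Fin 2 → ℝ) : Prop := 0 < u 0 * v 1 - u 1 * v 0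

lemma dotProduct_fin_two {R : Type*} [CommSemiring R] (a b : Fin 2 → R) :
    a ⬝ᵥ b = a 0 * b 0 + a 1 * b 1 := by
  simp [dotProduct, Fin.sum_univ_two]

lemma dotProduct_self_pos {n : Type*} [Fintype n] {v : n → ℝ} (hv : v ≠ 0) : 0 < v ⬝ᵥ v :=
  (Finset.sum_nonneg fun i _ => mul_self_nonneg (v i)).lt_of_ne' (dotProduct_self_eq_zero.not.2 hv)

lemma mulVec_dotProduct_mulVec_of_mem_orthogonalGroup {n R : Type*} [Fintype n] [DecidableEq n]
    [CommRing R] {Q : Matrix n n R} (hQ : Q ∈ orthogonalGroup n R) (a b : n → R) :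
    Q *ᵥ a ⬝ᵥ Q *ᵥ b = a ⬝ᵥ b := by
  rw [dotProduct_mulVec, vecMul_mulVec, (mem_orthogonalGroup_iff' n R).1 hQ, vecMul_one]

lemma ang_mulVec_of_mem_orthogonalGroup {Q : Matrix (Fin 2) (Fin 2) ℝ}
    (hQ : Q ∈ orthogonalGroup (Fin 2) ℝ) (u v : Fin 2 → ℝ) :
    ang (Q *ᵥ u) (Q *ᵥ v) = ang u v := by
  simp only [ang, mulVec_dotProduct_mulVec_of_mem_orthogonalGroup hQ]

lemma ang_eq_angle (u v : Fin 2 → ℝ) :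
    ang u v = InnerProductGeometry.angle (WithLp.toLp 2 u : EuclideanSpace ℝ (Fin 2))
      (WithLp.toLp 2 v) := by
  simp only [ang, InnerProductGeometry.angle, norm_eq_sqrt_real_inner,
    EuclideanSpace.inner_toLp_toLp, star_trivial, dotProduct_comm v u]

lemma cos_ang (u v : Fin 2 → ℝ) :
    cos (ang u v) = u ⬝ᵥ v / (√(u ⬝ᵥ u) * √(v ⬝ᵥ v)) := by
  rw [ang_eq_angle, InnerProductGeometry.cos_angle]
  simp only [norm_eq_sqrt_real_inner, EuclideanSpace.inner_toLp_toLp, star_trivial,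
    dotProduct_comm v u]

lemma cos_ang_le_cos_ang {u v u' v' : Fin 2 → ℝ} (h : ang u v ≤ ang u' v') :
    u' ⬝ᵥ v' / (√(u' ⬝ᵥ u') * √(v' ⬝ᵥ v')) ≤
      u ⬝ᵥ v / (√(u ⬝ᵥ u) * √(v ⬝ᵥ v)) := by
  rw [← cos_ang, ← cos_ang]
  exact cos_le_cos_of_nonneg_of_le_pi (arccos_nonneg _) (arccos_le_pi _) h

lemma posOriented_mulVec_iff {Q : Matrix (Fin 2) (Fin 2) ℝ} (hQ : Q.det = 1)
    {a b : Fin 2 → ℝ} :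
    posOriented (Q *ᵥ a) (Q *ᵥ b) ↔ posOriented a b := by
  have h : (Q *ᵥ a) 0 * (Q *ᵥ b) 1 - (Q *ᵥ a) 1 * (Q *ᵥ b) 0 =
      Q.det * (a 0 * b 1 - a 1 * b 0) := by
    simp only [mulVec_fin_two, det_fin_two, Matrix.cons_val_zero, Matrix.cons_val_one]
    ring
  rw [posOriented, posOriented, h, hQ, one_mul]

section PositiveAxis

variable {a : Fin 2 → ℝ}

lemma fst_nonneg_of_dotProduct_nonneg (ha0 : 0 < a 0) (ha1 : a 1 = 0) {w : Fin 2 → ℝ}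
    (h : 0 ≤ a ⬝ᵥ w) : 0 ≤ w 0 := by
  rw [dotProduct_fin_two, ha1, zero_mul, add_zero] at h
  exact nonneg_of_mul_nonneg_right h ha0

lemma snd_pos_of_posOriented (ha0 : 0 < a 0) (ha1 : a 1 = 0) {b : Fin 2 → ℝ}
    (h : posOriented a b) : 0 < b 1 := by
  rw [posOriented, ha1, zero_mul, sub_zero] at h
  exact pos_of_mul_pos_right h ha0.le

lemma snd_nonneg_of_ang_le (ha0 : 0 < a 0) (ha1 : a 1 = 0) {b w : Fin 2 → ℝ}
    (hb0 : 0 ≤ b 0) (hb1 : 0 < b 1) (hang : ang w b ≤ ang a b) : 0 ≤ w 1 := by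
  by_contra! hw1
  have hnw : 0 < √(w ⬝ᵥ w) := sqrt_pos.2 (dotProduct_self_pos fun h => by simp [h] at hw1)
  have hnb : 0 < √(b ⬝ᵥ b) := sqrt_pos.2 (dotProduct_self_pos fun h => by simp [h] at hb1)
  have hna : √(a ⬝ᵥ a) = a 0 := by
    rw [dotProduct_fin_two, ha1, mul_zero, add_zero, sqrt_mul_self ha0.le]
  have hw0 : w 0 ≤ √(w ⬝ᵥ w) :=
    (le_abs_self _).trans (abs_le_sqrt (by rw [dotProduct_fin_two]; nlinarith))
  have hcos := cos_ang_le_cos_ang hang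
  rw [hna, dotProduct_fin_two a, ha1, zero_mul, add_zero, dotProduct_fin_two w,
    mul_div_mul_left _ _ ha0.ne', div_le_div_iff₀ hnb (mul_pos hnw hnb)] at hcos
  -- `b 0 * ‖w‖ ≤ w ⬝ᵥ b`, but `w 0 * b 0 ≤ ‖w‖ * b 0` and `w 1 * b 1 < 0`
  nlinarith [mul_le_mul_of_nonneg_right hw0 hb0, mul_neg_of_neg_of_pos hw1 hb1]

end PositiveAxis

theorem rotation_maps_into_nonneg_quadrant
    (p : ℕ) (u : Fin p → (Fin 2 → ℝ))
    (hu : ∀ i, u i ≠ 0)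
    (h0 : 0 < p) (h1 : 1 < p)
    (hdot : ∀ i j, 0 ≤ u i ⬝ᵥ u j)
    (hmax : ∀ i j, ang (u i) (u j) ≤ ang (u ⟨0, h0⟩) (u ⟨1, h1⟩))
    (horient : posOriented (u ⟨0, h0⟩) (u ⟨1, h1⟩))
    (Q : Matrix (Fin 2) (Fin 2) ℝ) (hQ : Q ∈ Matrix.specialOrthogonalGroup (Fin 2) ℝ)
    (hQu : Q.mulVec (u ⟨0, h0⟩) = Real.sqrt (u ⟨0, h0⟩ ⬝ᵥ u ⟨0, h0⟩) • ![1, 0]) :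
    ∀ j, 0 ≤ Q.mulVec (u j) := by
  obtain ⟨hQo, hQdet⟩ := mem_specialOrthogonalGroup_iff.1 hQ
  have ha0 : 0 < (Q *ᵥ u ⟨0, h0⟩) 0 := by
    simpa [hQu] using sqrt_pos.2 (dotProduct_self_pos (hu ⟨0, h0⟩))
  have ha1 : (Q *ᵥ u ⟨0, h0⟩) 1 = 0 := by simp [hQu]
  have hfst : ∀ i, 0 ≤ (Q *ᵥ u i) 0 := fun i =>
    fst_nonneg_of_dotProduct_nonneg ha0 ha1
      (by rw [mulVec_dotProduct_mulVec_of_mem_orthogonalGroup hQo]; exact hdot _ i)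
  have hb1 : 0 < (Q *ᵥ u ⟨1, h1⟩) 1 :=
    snd_pos_of_posOriented ha0 ha1 ((posOriented_mulVec_iff hQdet).2 horient)
  intro j k
  fin_cases k
  · exact hfst j
  · refine snd_nonneg_of_ang_le ha0 ha1 (hfst _) hb1 ?_
    rw [ang_mulVec_of_mem_orthogonalGroup hQo, ang_mulVec_of_mem_orthogonalGroup hQo]
    exact hmax j _
end

section
/- A finite set U ⊆ ℝ² can be mapped into the nonnegative quadrant ℝ²≥0 by an orthogonal linear map of ℝ² if and only if ⟨u, v⟩ ≥ 0 for all u, v ∈ U. -/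
/-!
For u, v ∈ ℝ², `wedge u v ≥ 0` says that v lies within a half-turn counterclockwise of u. Among
nonzero vectors with pairwise nonnegative inner products (pairwise angles at most π/2) this
relation is total and transitive, the latter by the identity
`wedge a c * ‖b‖² = ⟪a, b⟫ * wedge b c + wedge a b * ⟪b, c⟫`. So a finite such U has a most
clockwise nonzero vector w, and the rotation taking w to the positive first axis sends each u ∈ U
to a positive multiple of `(⟪w, u⟫, wedge w u)`, which lies in the quadrant. Conversely,
orthogonal maps preserve inner products, and vectors in the quadrant have nonnegative ones.
-/

open Matrix

theorem Finset.exists_forall_rel_of_total_of_trans {α : Type*} {r : α → α → Prop}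
    {s : Finset α} (hs : s.Nonempty) (total : ∀ a ∈ s, ∀ b ∈ s, r a b ∨ r b a)
    (trans : ∀ a ∈ s, ∀ b ∈ s, ∀ c ∈ s, r a b → r b c → r a c) :
    ∃ a ∈ s, ∀ b ∈ s, r a b := by
  induction hs using Finset.Nonempty.cons_induction with
  | singleton a => exact ⟨a, mem_singleton_self a, by simpa using total a (by simp) a (by simp)⟩
  | @cons a s ha hs ih =>
    have sub {x} (hx : x ∈ s) : x ∈ cons a s ha := mem_cons_of_mem hx
    obtain ⟨m, hm, hmin⟩ := ih
      (fun x hx y hy ↦ total x (sub hx) y (sub hy))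
      (fun x hx y hy z hz ↦
        trans x (sub hx) y (sub hy) z (sub hz))
    have ha' : a ∈ cons a s ha := mem_cons_self a s
    simp only [mem_cons, exists_eq_or_imp, forall_eq_or_imp]
    rcases total m (sub hm) a ha' with hma | ham
    · exact .inr ⟨m, hm, hma, hmin⟩
    · exact .inl ⟨(total a ha' a ha').elim id id,
        fun b hb ↦ trans a ha' m (sub hm) b (sub hb) ham (hmin b hb)⟩

theorem Matrix.dotProduct_self_pos_of_ne_zero {n R : Type*} [Fintype n] [Ring R] [LinearOrder R]
    [IsStrictOrderedRing R] {v : n → R} (hv : v ≠ 0) : 0 < v ⬝ᵥ v :=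
  (Finset.sum_nonneg fun i _ ↦ mul_self_nonneg (v i)).lt_of_ne
    (Ne.symm (dotProduct_self_eq_zero.not.mpr hv))

section Wedge

variable {R : Type*} [CommRing R]

def wedge (u v : Fin 2 → R) : R := u 0 * v 1 - u 1 * v 0

theorem wedge_swap (u v : Fin 2 → R) : wedge v u = -wedge u v := by
  simp only [wedge]; ring

theorem wedge_mul_dotProduct_self (a b c : Fin 2 → R) :
    wedge a c * (b ⬝ᵥ b) = (a ⬝ᵥ b) * wedge b c + wedge a b * (b ⬝ᵥ c) := by
  simp only [wedge, dotProduct, Fin.sum_univ_two]; ring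

variable [LinearOrder R] [IsStrictOrderedRing R]

theorem wedge_nonneg_trans {a b c : Fin 2 → R} (hb : b ≠ 0) (hab : 0 ≤ a ⬝ᵥ b)
    (hbc : 0 ≤ b ⬝ᵥ c) (hwab : 0 ≤ wedge a b) (hwbc : 0 ≤ wedge b c) : 0 ≤ wedge a c := by
  refine nonneg_of_mul_nonneg_left ?_ (dotProduct_self_pos_of_ne_zero hb)
  rw [wedge_mul_dotProduct_self a b c]
  positivity

theorem exists_forall_wedge_nonneg {U : Finset (Fin 2 → R)} (hU : ∃ u ∈ U, u ≠ 0)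
    (h : ∀ u ∈ U, ∀ v ∈ U, 0 ≤ u ⬝ᵥ v) : ∃ w ∈ U, w ≠ 0 ∧ ∀ u ∈ U, 0 ≤ wedge w u := by
  classical
  obtain ⟨w, hw, hmin⟩ := Finset.exists_forall_rel_of_total_of_trans
    (r := fun u v ↦ 0 ≤ wedge u v) (s := U.filter (· ≠ 0))
    (by simpa [Finset.filter_nonempty_iff] using hU)
    (fun a _ b _ ↦ by rw [wedge_swap a b, neg_nonneg]; exact le_total _ _)
    (fun a ha b hb c hc ↦ by
      simp only [Finset.mem_filter] at ha hb hc
      exact wedge_nonneg_trans hb.2 (h a ha.1 b hb.1) (h b hb.1 c hc.1))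
  rw [Finset.mem_filter] at hw
  refine ⟨w, hw.1, hw.2, fun u hu ↦ ?_⟩
  by_cases hu0 : u = 0
  · simp [hu0, wedge]
  · exact hmin u (Finset.mem_filter.mpr ⟨hu, hu0⟩)

end Wedge

theorem dotProduct_mulVec_mulVec_of_mem_orthogonalGroup {n R : Type*} [Fintype n]
    [DecidableEq n] [CommRing R] {Q : Matrix n n R} (hQ : Q ∈ orthogonalGroup n R)
    (u v : n → R) : Q *ᵥ u ⬝ᵥ Q *ᵥ v = u ⬝ᵥ v := by
  rw [dotProduct_mulVec, ← mulVec_transpose, mulVec_mulVec, (mem_orthogonalGroup_iff' n R).mp hQ,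
    one_mulVec]

theorem exists_mem_orthogonalGroup_mulVec_eq_smul {w : Fin 2 → ℝ} (hw : w ≠ 0) :
    ∃ Q ∈ orthogonalGroup (Fin 2) ℝ, ∃ r : ℝ, 0 < r ∧
      ∀ u, Q *ᵥ u = r • ![w ⬝ᵥ u, wedge w u] := by
  have hww : 0 < w ⬝ᵥ w := dotProduct_self_pos_of_ne_zero hw
  set r := (√(w ⬝ᵥ w))⁻¹
  have hr : r ^ 2 * (w 0 ^ 2 + w 1 ^ 2) = 1 := by
    rw [inv_pow, Real.sq_sqrt hww.le, inv_mul_eq_one₀ hww.ne']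
    simp [dotProduct, Fin.sum_univ_two, sq]
  refine ⟨!![r * w 0, r * w 1; -(r * w 1), r * w 0],
    (of_mem_specialOrthogonalGroup_fin_two_iff.mpr ⟨rfl, ?_, ?_⟩).1, r, by positivity, ?_⟩
  · exact (neg_neg _).symm
  · linear_combination hr
  · intro u
    ext i
    fin_cases i <;> simp [mulVec, dotProduct, wedge, Fin.sum_univ_two] <;> ring

theorem embeddable_into_quadrant_iff_nonneg_inner
    (U : Finset (Fin 2 → ℝ)) :
    (∃ Q ∈ Matrix.orthogonalGroup (Fin 2) ℝ, ∀ u ∈ U, 0 ≤ Q.mulVec u) ↔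
    (∀ u ∈ U, ∀ v ∈ U, 0 ≤ u ⬝ᵥ v) := by
  constructor
  · rintro ⟨Q, hQ, hQU⟩ u hu v hv
    rw [← dotProduct_mulVec_mulVec_of_mem_orthogonalGroup hQ]
    exact dotProduct_nonneg_of_nonneg (hQU u hu) (hQU v hv)
  · intro h
    by_cases hU : ∀ u ∈ U, u = 0
    · exact ⟨1, one_mem _, fun u hu ↦ by simp [hU u hu]⟩
    obtain ⟨w, hwU, hw, hwedge⟩ := exists_forall_wedge_nonneg (by simpa using hU) h
    obtain ⟨Q, hQ, r, hr, hQu⟩ := exists_mem_orthogonalGroup_mulVec_eq_smul hw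
    refine ⟨Q, hQ, fun u hu ↦ ?_⟩
    rw [hQu]
    refine smul_nonneg hr.le ?_
    rw [Pi.le_def, Fin.forall_fin_two]
    exact ⟨h w hwU u hu, hwedge u hu⟩
end
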